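/- Let ρ_i = γ_i·A_i with γ_i > 0 and A_i > 0 for i = 1,…,K, and let N > 0. Then the minimum over probability weight vectors w (w_i > 0, Σw_i = 1) of (C/√N)·Σ_i ρ_i/√(w_i) equals (C/√N)·(Σ_i (γ_i A_i)^{2/3})^{3/2}, for any constant C > 0. -/

import Mathlib

/-!
The bound is Jensen's inequality for the convex map `x ↦ x ^ p` with `p = 3/2`, so that
`√(w i) = w i ^ (p - 1)`: applied with weights `w i` at the points `ρ i ^ (1/p) / w i`, it gives
`(∑ ρ i ^ (1/p)) ^ p ≤ ∑ ρ i / w i ^ (p - 1)` for every probability vector `w`.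
Equality holds when those points are all equal, i.e. for `w i ∝ ρ i ^ (1/p)`.
-/

open Finset Real

section

variable {ι : Type*} (s : Finset ι) {ρ w : ι → ℝ} {p : ℝ}

theorem rpow_sum_rpow_inv_le_sum_div_rpow (hp : 1 ≤ p) (hρ : ∀ i ∈ s, 0 ≤ ρ i)
    (hw : ∀ i ∈ s, 0 < w i) (hw₁ : ∑ i ∈ s, w i = 1) :
    (∑ i ∈ s, ρ i ^ p⁻¹) ^ p ≤ ∑ i ∈ s, ρ i / w i ^ (p - 1) := by
  have hp₀ : p ≠ 0 := by positivity
  have hmean : ∑ i ∈ s, w i * (ρ i ^ p⁻¹ / w i) = ∑ i ∈ s, ρ i ^ p⁻¹ :=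
    sum_congr rfl fun i hi => mul_div_cancel₀ _ (hw i hi).ne'
  have hpow : ∑ i ∈ s, w i * (ρ i ^ p⁻¹ / w i) ^ p = ∑ i ∈ s, ρ i / w i ^ (p - 1) := by
    refine sum_congr rfl fun i hi => ?_
    have hwi := hw i hi
    rw [div_rpow (rpow_nonneg (hρ i hi) _) hwi.le, ← rpow_mul (hρ i hi), inv_mul_cancel₀ hp₀,
      rpow_one, rpow_sub_one hwi.ne']
    field_simp
  rw [← hmean, ← hpow]
  exact rpow_arith_mean_le_arith_mean_rpow s w _ (fun i hi => (hw i hi).le) hw₁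
    (fun i hi => div_nonneg (rpow_nonneg (hρ i hi) _) (hw i hi).le) hp

noncomputable def optimalWeight (ρ : ι → ℝ) (p : ℝ) (i : ι) : ℝ :=
  ρ i ^ p⁻¹ / ∑ j ∈ s, ρ j ^ p⁻¹

variable (hs : s.Nonempty) (hρ : ∀ i ∈ s, 0 < ρ i)
include hs hρ

theorem sum_rpow_inv_pos : 0 < ∑ i ∈ s, ρ i ^ p⁻¹ :=
  sum_pos (fun i hi => rpow_pos_of_pos (hρ i hi) _) hs

theorem optimalWeight_pos {i : ι} (hi : i ∈ s) : 0 < optimalWeight s ρ p i :=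
  div_pos (rpow_pos_of_pos (hρ i hi) _) (sum_rpow_inv_pos s hs hρ)

theorem sum_optimalWeight : ∑ i ∈ s, optimalWeight s ρ p i = 1 := by
  unfold optimalWeight
  rw [← sum_div, div_self (sum_rpow_inv_pos s hs hρ).ne']

theorem sum_div_rpow_optimalWeight (hp : p ≠ 0) :
    ∑ i ∈ s, ρ i / optimalWeight s ρ p i ^ (p - 1) = (∑ i ∈ s, ρ i ^ p⁻¹) ^ p := by
  set S := ∑ i ∈ s, ρ i ^ p⁻¹
  have hS : 0 < S := sum_rpow_inv_pos s hs hρ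
  have hterm : ∀ i ∈ s, ρ i / optimalWeight s ρ p i ^ (p - 1) = ρ i ^ p⁻¹ * S ^ (p - 1) := by
    intro i hi
    have hρi := hρ i hi
    rw [optimalWeight, div_rpow (rpow_nonneg hρi.le _) hS.le, ← rpow_mul hρi.le,
      div_div_eq_mul_div, div_eq_iff (rpow_pos_of_pos hρi _).ne', mul_right_comm,
      ← rpow_add hρi, ← mul_one_add, add_sub_cancel, inv_mul_cancel₀ hp, rpow_one]
  rw [sum_congr rfl hterm, ← sum_mul, ← rpow_one_add' hS.le (by simpa using hp), add_sub_cancel]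

end

theorem minimized_generalization_bound_general (K : ℕ) (hK : 0 < K)
    (γ A : Fin K → ℝ) (hγ : ∀ i, 0 < γ i) (hA : ∀ i, 0 < A i)
    (C N : ℝ) (hC : 0 < C) :
    IsLeast
      {y : ℝ | ∃ w : Fin K → ℝ, (∀ i, 0 < w i) ∧ (∑ i, w i) = 1 ∧
        y = (C / Real.sqrt N) * ∑ i, (γ i * A i) / Real.sqrt (w i)}
      ((C / Real.sqrt N) * (∑ i, (γ i * A i) ^ ((2:ℝ)/3)) ^ ((3:ℝ)/2)) := by
  have hne : (univ : Finset (Fin K)).Nonempty := univ_nonempty_iff.mpr ⟨⟨0, hK⟩⟩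
  have hρ : ∀ i ∈ univ, 0 < γ i * A i := fun i _ => mul_pos (hγ i) (hA i)
  have hsqrt : ∀ x : ℝ, sqrt x = x ^ ((3:ℝ)/2 - 1) := by norm_num [sqrt_eq_rpow]
  have hexp : (2:ℝ)/3 = ((3:ℝ)/2)⁻¹ := by norm_num
  refine ⟨⟨optimalWeight univ (fun i => γ i * A i) (3/2),
    fun i => optimalWeight_pos univ hne hρ (mem_univ i), sum_optimalWeight univ hne hρ, ?_⟩, ?_⟩
  · simp only [hsqrt (optimalWeight _ _ _ _), hexp]
    rw [sum_div_rpow_optimalWeight univ hne hρ (by norm_num)]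
  · rintro y ⟨w, hw, hw₁, rfl⟩
    have hC' : 0 ≤ C / sqrt N := by positivity
    simp only [hsqrt (w _), hexp]
    gcongr
    exact rpow_sum_rpow_inv_le_sum_div_rpow univ (by norm_num) (fun i hi => (hρ i hi).le)
      (fun i _ => hw i) hw₁

theorem minimized_generalization_bound (K : ℕ) (hK : 0 < K)
    (γ A : Fin K → ℝ) (hγ : ∀ i, 0 < γ i) (hA : ∀ i, 0 < A i)
    (C N : ℝ) (hC : 0 < C) (hN : 0 < N) :
    IsLeast
      {y : ℝ | ∃ w : Fin K → ℝ, (∀ i, 0 < w i) ∧ (∑ i, w i) = 1 ∧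
        y = (C / Real.sqrt N) * ∑ i, (γ i * A i) / Real.sqrt (w i)}
      ((C / Real.sqrt N) * (∑ i, (γ i * A i) ^ ((2:ℝ)/3)) ^ ((3:ℝ)/2)) :=
  minimized_generalization_bound_general K hK γ A hγ hA C N hC
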